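/- For a trace-free symmetric two-tensor T on an m-dimensional real inner product space (m ≥ 2), the trace of T³ satisfies tr(T³) ≤ ((m-2)/√(m(m-1))) |T|³, where |T| denotes the Frobenius norm of T. -/

import Mathlib

/-!
Diagonalise `T` in an orthonormal eigenbasis: its eigenvalues `λᵢ` sum to `0` and
`|T|² = ∑ λᵢ²`. Put `t = |T| / √(m(m-1))`. Cauchy–Schwarz applied to `λᵢ = -∑_{j ≠ i} λⱼ`
gives `λᵢ ≤ (m-1) t`, so `∑ (λᵢ + t)² (λᵢ - (m-1) t) ≤ 0`; expanding this sum with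
`∑ λᵢ = 0` and `m (m-1) t² = |T|²` leaves `tr T³ ≤ (m-2) t |T|²`.
-/

open Finset

section SumZero

variable {ι : Type*} [Fintype ι] {a : ι → ℝ}

lemma card_mul_sq_le_of_sum_eq_zero (ha : ∑ i, a i = 0) (i : ι) :
    Fintype.card ι * a i ^ 2 ≤ (Fintype.card ι - 1) * ∑ j, a j ^ 2 := by
  classical
  have hcard : (#(univ.erase i) : ℝ) = Fintype.card ι - 1 := by
    rw [card_erase_of_mem (mem_univ i), card_univ, Nat.cast_pred (Fintype.card_pos_iff.2 ⟨i⟩)]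
  have hsum : ∑ j ∈ univ.erase i, a j = -a i := by
    rw [sum_erase_eq_sub (mem_univ i), ha, zero_sub]
  have hsq : ∑ j ∈ univ.erase i, a j ^ 2 = ∑ j, a j ^ 2 - a i ^ 2 :=
    sum_erase_eq_sub (mem_univ i)
  have hcs := sq_sum_le_card_mul_sum_sq (s := univ.erase i) (f := a)
  rw [hsum, neg_sq, hcard, hsq] at hcs
  linarith

lemma sum_cube_le_of_sum_eq_zero_of_le (ha : ∑ i, a i = 0) {t : ℝ}
    (hle : ∀ i, a i ≤ (Fintype.card ι - 1) * t) :
    ∑ i, a i ^ 3 ≤ (Fintype.card ι - 3) * t * ∑ i, a i ^ 2 +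
      Fintype.card ι * (Fintype.card ι - 1) * t ^ 3 := by
  set n : ℝ := (Fintype.card ι : ℝ)
  have hnonpos : ∑ i, (a i + t) ^ 2 * (a i - (n - 1) * t) ≤ 0 :=
    sum_nonpos fun i _ => mul_nonpos_of_nonneg_of_nonpos (sq_nonneg _) (by linarith [hle i])
  have hexpand : ∑ i, (a i + t) ^ 2 * (a i - (n - 1) * t) =
      ∑ i, a i ^ 3 + (3 - n) * t * ∑ i, a i ^ 2 + (3 - 2 * n) * t ^ 2 * ∑ i, a i
        - n * (n - 1) * t ^ 3 := by
    have hterm : ∀ i, (a i + t) ^ 2 * (a i - (n - 1) * t) =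
        a i ^ 3 + (3 - n) * t * a i ^ 2 + (3 - 2 * n) * t ^ 2 * a i - (n - 1) * t ^ 3 :=
      fun i => by ring
    simp only [hterm, sum_add_distrib, sum_sub_distrib, ← mul_sum, sum_const, card_univ,
      nsmul_eq_mul]
    ring
  rw [hexpand, ha] at hnonpos
  linarith

theorem sum_cube_le_of_sum_eq_zero (hn : 2 ≤ Fintype.card ι) (ha : ∑ i, a i = 0) :
    ∑ i, a i ^ 3 ≤ ((Fintype.card ι - 2) / √(Fintype.card ι * (Fintype.card ι - 1))) *
      √(∑ i, a i ^ 2) ^ 3 := by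
  set n : ℝ := (Fintype.card ι : ℝ)
  set q := ∑ i, a i ^ 2
  have hn' : (2 : ℝ) ≤ n := Nat.ofNat_le_cast.mpr hn
  have hq : 0 ≤ q := sum_nonneg fun i _ => sq_nonneg _
  have hn1 : 0 < n - 1 := by linarith
  have hpos : 0 < n * (n - 1) := by positivity
  set t := √q / √(n * (n - 1))
  have ht : 0 ≤ t := by positivity
  have hqt : n * (n - 1) * t ^ 2 = q := by
    rw [div_pow, Real.sq_sqrt hq, Real.sq_sqrt hpos.le]
    field_simp
  have hle : ∀ i, a i ≤ (n - 1) * t := fun i =>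
    le_of_sq_le_sq (by nlinarith [card_mul_sq_le_of_sum_eq_zero ha i]) (mul_nonneg hn1.le ht)
  calc ∑ i, a i ^ 3 ≤ (n - 3) * t * q + n * (n - 1) * t ^ 3 :=
        sum_cube_le_of_sum_eq_zero_of_le ha hle
    _ = (n - 2) * t * q := by rw [← hqt]; ring
    _ = ((n - 2) / √(n * (n - 1))) * √q ^ 3 := by
        rw [pow_succ, Real.sq_sqrt hq]; ring

end SumZero

namespace LinearMap.IsSymmetric

variable {𝕜 E : Type*} [RCLike 𝕜] [NormedAddCommGroup E] [InnerProductSpace 𝕜 E]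
  [FiniteDimensional 𝕜 E] {n : ℕ} (hn : Module.finrank 𝕜 E = n)

lemma trace_pow_eq_sum_eigenvalues_pow {T : E →ₗ[𝕜] E} (hT : T.IsSymmetric) (k : ℕ) :
    (T ^ k).trace 𝕜 E = ∑ i, (hT.eigenvalues hn i : 𝕜) ^ k := by
  rw [trace_eq_sum_inner _ (hT.eigenvectorBasis hn)]
  refine Fintype.sum_congr _ _ fun i => ?_
  rw [(hT.hasEigenvector_eigenvectorBasis hn i).pow_apply k, inner_smul_right,
    inner_self_eq_norm_sq_to_K, (hT.eigenvectorBasis hn).orthonormal.1 i]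
  simp

end LinearMap.IsSymmetric

/-- For a trace-free self-adjoint operator `T` on an `m`-dimensional real inner product
space (`m ≥ 2`), one has `tr(T³) ≤ ((m-2)/√(m(m-1))) |T|³` where `|T| = √(tr T²)`. -/
theorem stmt0 {V : Type*} [NormedAddCommGroup V] [InnerProductSpace ℝ V]
    [FiniteDimensional ℝ V] (m : ℕ) (hm : 2 ≤ m) (hdim : Module.finrank ℝ V = m)
    (T : V →ₗ[ℝ] V) (hT : LinearMap.IsSymmetric T)
    (htr : LinearMap.trace ℝ V T = 0) :
    LinearMap.trace ℝ V (T ∘ₗ T ∘ₗ T) ≤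
      (((m : ℝ) - 2) / Real.sqrt ((m : ℝ) * ((m : ℝ) - 1))) *
        Real.sqrt (LinearMap.trace ℝ V (T ∘ₗ T)) ^ 3 := by
  have hsum : ∑ i, hT.eigenvalues hdim i = 0 := by
    simpa [hT.trace_eq_sum_eigenvalues hdim] using htr
  have hcube := sum_cube_le_of_sum_eq_zero (by simpa using hm) hsum
  rw [Fintype.card_fin] at hcube
  change (T ^ 3).trace ℝ V ≤ _ * √((T ^ 2).trace ℝ V) ^ 3
  simpa only [hT.trace_pow_eq_sum_eigenvalues_pow hdim, RCLike.ofReal_real_eq_id, id] using hcube
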